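/- arXiv:1004.5164 — 4 statements merged into one kernel-verified Lean document; each statement's English description precedes it below -/
import Mathlib

section
/- The quadratic form x² − 6y² − 5z² + 30w² is anisotropic over ℚ; that is, if x, y, z, w are rational numbers with x² − 6y² − 5z² + 30w² = 0, then x = y = z = w = 0. (Equivalently, the quaternion algebra B = ℚ + ℚa + ℚb + ℚab with a² = 6, b² = 5, ab = −ba is a division algebra.) -/
lemma zmod3_aux1 : ∀ a b : ZMod 3, a ^ 2 = 2 * b ^ 2 → a = 0 ∧ b = 0 := by decide

lemma zmod3_aux2 : ∀ a b : ZMod 3, a ^ 2 + b ^ 2 = 0 → a = 0 ∧ b = 0 := by decide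

lemma int_anisotropic : ∀ n : ℕ, ∀ x y z w : ℤ,
    x.natAbs + y.natAbs + z.natAbs + w.natAbs = n →
    x ^ 2 - 6 * y ^ 2 - 5 * z ^ 2 + 30 * w ^ 2 = 0 →
    x = 0 ∧ y = 0 ∧ z = 0 ∧ w = 0 := by
  intro n
  induction n using Nat.strong_induction_on with
  | _ n ih =>
    intro x y z w hn h
    have h3 : (3 : ZMod 3) = 0 := by decide
    -- mod 3 : x² = 2 z²
    have hc : (x : ZMod 3) ^ 2 - 6 * (y : ZMod 3) ^ 2 - 5 * (z : ZMod 3) ^ 2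
        + 30 * (w : ZMod 3) ^ 2 = 0 := by exact_mod_cast congrArg (Int.cast : ℤ → ZMod 3) h
    have h1 : (x : ZMod 3) ^ 2 = 2 * (z : ZMod 3) ^ 2 := by
      linear_combination hc + (2 * (y : ZMod 3) ^ 2 + (z : ZMod 3) ^ 2 - 10 * (w : ZMod 3) ^ 2) * h3
    obtain ⟨hx0, hz0⟩ := zmod3_aux1 _ _ h1
    have hxd : (3 : ℤ) ∣ x := by
      have := (ZMod.intCast_zmod_eq_zero_iff_dvd x 3).mp hx0; exact_mod_cast this
    have hzd : (3 : ℤ) ∣ z := by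
      have := (ZMod.intCast_zmod_eq_zero_iff_dvd z 3).mp hz0; exact_mod_cast this
    obtain ⟨a, rfl⟩ := hxd
    obtain ⟨c, rfl⟩ := hzd
    have h2 : 3 * a ^ 2 - 2 * y ^ 2 - 15 * c ^ 2 + 10 * w ^ 2 = 0 := by nlinarith [h]
    have hc2 : 3 * (a : ZMod 3) ^ 2 - 2 * (y : ZMod 3) ^ 2 - 15 * (c : ZMod 3) ^ 2
        + 10 * (w : ZMod 3) ^ 2 = 0 := by exact_mod_cast congrArg (Int.cast : ℤ → ZMod 3) h2
    have h4 : (y : ZMod 3) ^ 2 + (w : ZMod 3) ^ 2 = 0 := by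
      linear_combination hc2 + ((y : ZMod 3) ^ 2 - 3 * (w : ZMod 3) ^ 2 - (a : ZMod 3) ^ 2
        + 5 * (c : ZMod 3) ^ 2) * h3
    obtain ⟨hy0, hw0⟩ := zmod3_aux2 _ _ h4
    have hyd : (3 : ℤ) ∣ y := by
      have := (ZMod.intCast_zmod_eq_zero_iff_dvd y 3).mp hy0; exact_mod_cast this
    have hwd : (3 : ℤ) ∣ w := by
      have := (ZMod.intCast_zmod_eq_zero_iff_dvd w 3).mp hw0; exact_mod_cast this
    obtain ⟨b, rfl⟩ := hyd
    obtain ⟨d, rfl⟩ := hwd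
    have h5 : a ^ 2 - 6 * b ^ 2 - 5 * c ^ 2 + 30 * d ^ 2 = 0 := by nlinarith [h]
    rcases Nat.eq_zero_or_pos n with hn0 | hnpos
    · subst hn0
      have : a = 0 ∧ b = 0 ∧ c = 0 ∧ d = 0 := by
        constructor
        · omega
        constructor
        · omega
        constructor
        · omega
        · omega
      obtain ⟨rfl, rfl, rfl, rfl⟩ := this
      norm_num
    · have hmeas : a.natAbs + b.natAbs + c.natAbs + d.natAbs < n := by
        have ha : (3 * a).natAbs = 3 * a.natAbs := by simp [Int.natAbs_mul]
        have hb : (3 * b).natAbs = 3 * b.natAbs := by simp [Int.natAbs_mul]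
        have hcc : (3 * c).natAbs = 3 * c.natAbs := by simp [Int.natAbs_mul]
        have hd : (3 * d).natAbs = 3 * d.natAbs := by simp [Int.natAbs_mul]
        omega
      obtain ⟨rfl, rfl, rfl, rfl⟩ := ih _ hmeas a b c d rfl h5
      norm_num

/-- The quadratic form x² − 6y² − 5z² + 30w² is anisotropic over ℚ
(the norm form of the quaternion algebra of discriminant 6). -/
theorem anisotropic_norm_form (x y z w : ℚ)
    (h : x ^ 2 - 6 * y ^ 2 - 5 * z ^ 2 + 30 * w ^ 2 = 0) :
    x = 0 ∧ y = 0 ∧ z = 0 ∧ w = 0 := by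
  have hxd : ((x.den : ℚ)) ≠ 0 := by exact_mod_cast x.den_nz
  have hyd : ((y.den : ℚ)) ≠ 0 := by exact_mod_cast y.den_nz
  have hzd : ((z.den : ℚ)) ≠ 0 := by exact_mod_cast z.den_nz
  have hwd : ((w.den : ℚ)) ≠ 0 := by exact_mod_cast w.den_nz
  have hx : (x.num : ℚ) = x * (x.den : ℚ) := (div_eq_iff hxd).mp (Rat.num_div_den x)
  have hy : (y.num : ℚ) = y * (y.den : ℚ) := (div_eq_iff hyd).mp (Rat.num_div_den y)
  have hz : (z.num : ℚ) = z * (z.den : ℚ) := (div_eq_iff hzd).mp (Rat.num_div_den z)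
  have hw : (w.num : ℚ) = w * (w.den : ℚ) := (div_eq_iff hwd).mp (Rat.num_div_den w)
  set X : ℤ := x.num * (y.den * z.den * w.den)
  set Y : ℤ := y.num * (x.den * z.den * w.den)
  set Z : ℤ := z.num * (x.den * y.den * w.den)
  set W : ℤ := w.num * (x.den * y.den * z.den)
  have key : X ^ 2 - 6 * Y ^ 2 - 5 * Z ^ 2 + 30 * W ^ 2 = 0 := by
    have hcast : ((X ^ 2 - 6 * Y ^ 2 - 5 * Z ^ 2 + 30 * W ^ 2 : ℤ) : ℚ) = 0 := by
      simp only [X, Y, Z, W]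
      push_cast
      rw [hx, hy, hz, hw]
      linear_combination ((x.den : ℚ) * y.den * z.den * w.den) ^ 2 * h
    exact_mod_cast hcast
  obtain ⟨hX, hY, hZ, hW⟩ := int_anisotropic _ X Y Z W rfl key
  have hd : (y.den * z.den * w.den : ℤ) ≠ 0 := by positivity
  have hd2 : (x.den * z.den * w.den : ℤ) ≠ 0 := by positivity
  have hd3 : (x.den * y.den * w.den : ℤ) ≠ 0 := by positivity
  have hd4 : (x.den * y.den * z.den : ℤ) ≠ 0 := by positivity
  refine ⟨?_, ?_, ?_, ?_⟩
  · exact Rat.num_eq_zero.mp ((mul_eq_zero.mp hX).resolve_right hd)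
  · exact Rat.num_eq_zero.mp ((mul_eq_zero.mp hY).resolve_right hd2)
  · exact Rat.num_eq_zero.mp ((mul_eq_zero.mp hZ).resolve_right hd3)
  · exact Rat.num_eq_zero.mp ((mul_eq_zero.mp hW).resolve_right hd4)
end

section
/- Let R = K[x₁, …, xₙ] be a polynomial ring over a field K, let q ∈ R be irreducible, and let u ∈ R be not divisible by q. If f, g, h, j ∈ R satisfy f·g = q·h·j and f² + u·g² = q·(h² + u·j²), then f = g = h = j = 0. -/
/-!
Since `q` is prime and does not divide `u`, the two equations force `q ∣ f` and `q ∣ g`;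
cancelling `q` turns `(f, g, h, j) = (q f', q g', h, j)` into a solution `(h, j, f', g')` of the
same system. Two such steps show that `q` divides all four entries and that their quotients by `q`
again form a solution, so every power of `q` divides `f, g, h, j`. In a ring where `q` has finite
multiplicity in every nonzero element (such as a polynomial ring over a field), they all vanish.
-/

section

variable {R : Type*} [CommRing R]

def IsDescentSolution (q u f g h j : R) : Prop :=
  f * g = q * h * j ∧ f ^ 2 + u * g ^ 2 = q * (h ^ 2 + u * j ^ 2)

variable {q u f g h j : R}

theorem IsDescentSolution.dvd_left (hq : Prime q) (hu : ¬ q ∣ u)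
    (hs : IsDescentSolution q u f g h j) : q ∣ f ∧ q ∣ g := by
  have hsum : q ∣ f ^ 2 + u * g ^ 2 := ⟨_, hs.2⟩
  have dvd_g_of_dvd_f (hf : q ∣ f) : q ∣ g := by
    have hug : q ∣ u * g ^ 2 := (dvd_add_right (dvd_pow hf two_ne_zero)).mp hsum
    exact hq.dvd_of_dvd_pow ((hq.dvd_or_dvd hug).resolve_left hu)
  have dvd_f_of_dvd_g (hg : q ∣ g) : q ∣ f :=
    hq.dvd_of_dvd_pow <| (dvd_add_left (dvd_mul_of_dvd_right (dvd_pow hg two_ne_zero) u)).mp hsum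
  rcases hq.dvd_or_dvd (⟨h * j, by rw [hs.1, mul_assoc]⟩ : q ∣ f * g) with hf | hg
  · exact ⟨hf, dvd_g_of_dvd_f hf⟩
  · exact ⟨dvd_f_of_dvd_g hg, hg⟩

variable [IsDomain R]

theorem IsDescentSolution.of_mul_left {f' g' : R} (hq : q ≠ 0)
    (hs : IsDescentSolution q u (q * f') (q * g') h j) : IsDescentSolution q u h j f' g' :=
  ⟨mul_left_cancel₀ hq (by linear_combination -hs.1),
    mul_left_cancel₀ hq (by linear_combination -hs.2)⟩

theorem IsDescentSolution.exists_eq_mul (hq : Prime q) (hu : ¬ q ∣ u)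
    (hs : IsDescentSolution q u f g h j) :
    ∃ f' g' h' j', f = q * f' ∧ g = q * g' ∧ h = q * h' ∧ j = q * j' ∧
      IsDescentSolution q u f' g' h' j' := by
  obtain ⟨⟨f', rfl⟩, ⟨g', rfl⟩⟩ := hs.dvd_left hq hu
  have hs' := hs.of_mul_left hq.ne_zero
  obtain ⟨⟨h', rfl⟩, ⟨j', rfl⟩⟩ := hs'.dvd_left hq hu
  exact ⟨f', g', h', j', rfl, rfl, rfl, rfl, hs'.of_mul_left hq.ne_zero⟩

theorem IsDescentSolution.pow_dvd (hq : Prime q) (hu : ¬ q ∣ u) (k : ℕ)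
    (hs : IsDescentSolution q u f g h j) :
    q ^ k ∣ f ∧ q ^ k ∣ g ∧ q ^ k ∣ h ∧ q ^ k ∣ j := by
  induction k generalizing f g h j with
  | zero => simp only [pow_zero, one_dvd, and_self]
  | succ k ih =>
    obtain ⟨f', g', h', j', rfl, rfl, rfl, rfl, hs'⟩ := hs.exists_eq_mul hq hu
    obtain ⟨hf, hg, hh, hj⟩ := ih hs'
    simp only [pow_succ']
    exact ⟨mul_dvd_mul_left q hf, mul_dvd_mul_left q hg, mul_dvd_mul_left q hh,
      mul_dvd_mul_left q hj⟩

theorem eq_zero_of_forall_pow_dvd [WfDvdMonoid R] {q a : R} (hq : Prime q)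
    (h : ∀ k : ℕ, q ^ k ∣ a) : a = 0 := by
  by_contra ha
  exact FiniteMultiplicity.not_iff_forall.mpr h (.of_prime_left hq ha)

theorem IsDescentSolution.eq_zero [WfDvdMonoid R] (hq : Prime q) (hu : ¬ q ∣ u)
    (hs : IsDescentSolution q u f g h j) :
    f = 0 ∧ g = 0 ∧ h = 0 ∧ j = 0 :=
  ⟨eq_zero_of_forall_pow_dvd hq fun k => (hs.pow_dvd hq hu k).1,
    eq_zero_of_forall_pow_dvd hq fun k => (hs.pow_dvd hq hu k).2.1,
    eq_zero_of_forall_pow_dvd hq fun k => (hs.pow_dvd hq hu k).2.2.1,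
    eq_zero_of_forall_pow_dvd hq fun k => (hs.pow_dvd hq hu k).2.2.2⟩

end

/-- Infinite descent in a polynomial ring: if `q` is irreducible, `q ∤ u`, and
`f·g = q·h·j`, `f² + u·g² = q·(h² + u·j²)`, then `f = g = h = j = 0`. -/
theorem descent_in_polynomial_ring (K : Type*) [Field K] (n : ℕ)
    (q u f g h j : MvPolynomial (Fin n) K)
    (hq : Irreducible q) (hu : ¬ q ∣ u)
    (h1 : f * g = q * h * j)
    (h2 : f ^ 2 + u * g ^ 2 = q * (h ^ 2 + u * j ^ 2)) :
    f = 0 ∧ g = 0 ∧ h = 0 ∧ j = 0 :=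
  IsDescentSolution.eq_zero hq.prime hu ⟨h1, h2⟩
end

section
/- Let R be an integral domain containing a field K, let W be a K-subspace of R, and let V ⊆ W be a K-subspace with dim_K(W/V) ≤ 1. Suppose f, g ∈ R are K-linearly independent and f², fg ∈ W. Then there exists a nonzero element h ∈ Kf + Kg such that f·h ∈ V and f·h ≠ 0. -/
/-- Abstract form of Lemma 4.1: if `V ≤ W` are `K`-subspaces of a domain `R` with
`dim_K(W/V) ≤ 1`, `f, g` are `K`-linearly independent, and `f², fg ∈ W`, then some
nonzero `h ∈ Kf + Kg` satisfies `f·h ∈ V` and `f·h ≠ 0`. -/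
theorem exists_multiple_in_subspace (K R : Type*) [Field K] [CommRing R] [IsDomain R]
    [Algebra K R] (W V : Submodule K R) (hVW : V ≤ W)
    (hdim : Module.rank K (↥W ⧸ V.comap W.subtype) ≤ 1)
    (f g : R) (hind : LinearIndependent K ![f, g])
    (hf2 : f ^ 2 ∈ W) (hfg : f * g ∈ W) :
    ∃ h ∈ Submodule.span K ({f, g} : Set R), h ≠ 0 ∧ f * h ∈ V ∧ f * h ≠ 0 := by
  have hpair := LinearIndependent.pair_iff.mp hind
  have hf0 : f ≠ 0 := hind.ne_zero 0
  -- images in the quotient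
  set Q := ↥W ⧸ V.comap W.subtype
  set w1 : W := ⟨f ^ 2, hf2⟩
  set w2 : W := ⟨f * g, hfg⟩
  obtain ⟨v, hv⟩ := rank_le_one_iff.mp hdim
  obtain ⟨c1, hc1⟩ := hv (Submodule.Quotient.mk w1)
  obtain ⟨c2, hc2⟩ := hv (Submodule.Quotient.mk w2)
  -- find (a, b) ≠ (0,0) with a • q1 + b • q2 = 0
  obtain ⟨a, b, hab, habz⟩ :
      ∃ a b : K, ¬(a = 0 ∧ b = 0) ∧
        a • Submodule.Quotient.mk (p := V.comap W.subtype) w1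
          + b • Submodule.Quotient.mk (p := V.comap W.subtype) w2 = 0 := by
    by_cases h1 : c1 = 0
    · exact ⟨1, 0, by simp, by simp [← hc1, h1]⟩
    · refine ⟨c2, -c1, fun h => h1 (neg_eq_zero.mp h.2), ?_⟩
      rw [← hc1, ← hc2, smul_smul, smul_smul, mul_comm]
      module
  have hmem : a • (f ^ 2) + b • (f * g) ∈ V := by
    have : Submodule.Quotient.mk (p := V.comap W.subtype) (a • w1 + b • w2) = 0 := by
      simpa using habz
    have := (Submodule.Quotient.mk_eq_zero _).mp this
    simpa [w1, w2] using this
  refine ⟨a • f + b • g, ?_, ?_, ?_, ?_⟩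
  · exact Submodule.add_mem _
      (Submodule.smul_mem _ _ (Submodule.subset_span (by simp)))
      (Submodule.smul_mem _ _ (Submodule.subset_span (by simp)))
  · intro h0
    exact hab (hpair a b h0)
  · have : f * (a • f + b • g) = a • (f ^ 2) + b • (f * g) := by
      simp only [Algebra.smul_def]; ring
    rwa [this]
  · refine mul_ne_zero hf0 fun h0 => hab (hpair a b h0)
end

section
/- Let f₁, f₂, f₃, f₄ be differentiable functions on an open set U ⊆ ℝ³ (coordinates z₁, z₂, z₃), let k₁, …, k₄ be scalars, and let P ∈ ℂ[X₁, X₂, X₃, X₄] be a polynomial satisfying the Euler-type relation Σᵢ kᵢXᵢ·∂P/∂Xᵢ = w·P for some scalar w. Suppose P(f₁(z), …, f₄(z)) = 0 for all z ∈ U. Then at every point z ∈ U where the gradient vector (∂P/∂X₁(f(z)), …, ∂P/∂X₄(f(z))) is nonzero, the determinant of the 4×4 matrix with first row (k₁f₁, k₂f₂, k₃f₃, k₄f₄) and remaining rows (∂f₁/∂zⱼ, …, ∂f₄/∂zⱼ) for j = 1, 2, 3 vanishes. -/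
/-!
Differentiating `P(f₁, …, f₄) = 0` at `z` by the chain rule shows that the gradient
`(∂P/∂Xᵢ(f(z)))ᵢ` is annihilated by the three derivative rows, and evaluating the Euler relation
at the zero `f(z)` of `P` shows that it is annihilated by the row `(kᵢ fᵢ(z))ᵢ`. A nonzero vector
in the kernel forces the determinant to vanish.
-/

open MvPolynomial Filter Topology

section ChainRule

variable {𝕜 E 𝔸 σ : Type*} [NontriviallyNormedField 𝕜] [NormedAddCommGroup E] [NormedSpace 𝕜 E]
  [NormedCommRing 𝔸] [NormedAlgebra 𝕜 𝔸] [Fintype σ] {f : σ → E → 𝔸} {f' : σ → E →L[𝕜] 𝔸}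
  {x : E}

theorem MvPolynomial.hasFDerivAt_eval_comp (hf : ∀ i, HasFDerivAt (f i) (f' i) x)
    (P : MvPolynomial σ 𝔸) :
    HasFDerivAt (fun y => eval (fun i => f i y) P)
      (∑ i, eval (fun i => f i x) (pderiv i P) • f' i) x := by
  classical
  induction P using MvPolynomial.induction_on with
  | C a =>
    simp only [eval_C]
    exact (hasFDerivAt_const a x).congr_fderiv (by ext v; simp)
  | add p q hp hq =>
    simp only [map_add]
    exact (hp.add hq).congr_fderiv (by ext v; simp [add_mul, Finset.sum_add_distrib])
  | mul_X p i hp =>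
    simp only [map_mul, eval_X]
    refine (hp.mul (hf i)).congr_fderiv ?_
    ext v
    simp [pderiv_X, Pi.single_apply, apply_ite (eval _), ite_mul, add_mul,
      Finset.sum_add_distrib, Finset.mul_sum, mul_assoc]

theorem MvPolynomial.sum_eval_pderiv_smul_eq_zero (hf : ∀ i, HasFDerivAt (f i) (f' i) x)
    {P : MvPolynomial σ 𝔸} (hP : ∀ᶠ y in 𝓝 x, eval (fun i => f i y) P = 0) :
    ∑ i, eval (fun i => f i x) (pderiv i P) • f' i = 0 :=
  (hasFDerivAt_eval_comp hf P).unique ((hasFDerivAt_const 0 x).congr_of_eventuallyEq hP)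

end ChainRule

theorem MvPolynomial.sum_mul_eval_pderiv_eq_zero_of_euler {R σ : Type*} [CommSemiring R]
    [Fintype σ] {P : MvPolynomial σ R} {k : σ → R} {w : R}
    (heuler : ∑ i, C (k i) * X i * pderiv i P = C w * P) {a : σ → R} (ha : eval a P = 0) :
    ∑ i, k i * a i * eval a (pderiv i P) = 0 := by
  simpa [ha] using congrArg (eval a) heuler

/-- Aoki–Ibukiyama, key direction of Proposition 2.3(ii): if `f₁, …, f₄` satisfy an
isobaric algebraic relation `P(f₁, …, f₄) = 0` (with Euler relation
`Σᵢ kᵢ Xᵢ ∂P/∂Xᵢ = w·P`), then the Rankin–Cohen bracket determinant vanishes at every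
point where the gradient of `P` at `(f₁(z), …, f₄(z))` is nonzero. -/
theorem bracket_vanishes_of_algebraic_relation
    (U : Set (Fin 3 → ℝ)) (hU : IsOpen U)
    (f : Fin 4 → (Fin 3 → ℝ) → ℂ) (k : Fin 4 → ℂ) (w : ℂ)
    (hdiff : ∀ i, DifferentiableOn ℝ (f i) U)
    (P : MvPolynomial (Fin 4) ℂ)
    (heuler : ∑ i : Fin 4, C (k i) * X i * pderiv i P = C w * P)
    (hrel : ∀ z ∈ U, eval (fun i => f i z) P = 0)
    (z : Fin 3 → ℝ) (hz : z ∈ U)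
    (hgrad : ∃ i : Fin 4, eval (fun i => f i z) (pderiv i P) ≠ 0) :
    Matrix.det (Matrix.of
      (Fin.cons (fun c : Fin 4 => k c * f c z)
        (fun (j : Fin 3) (c : Fin 4) => fderiv ℝ (f c) z (Pi.single j 1)))) = 0 := by
  set grad : Fin 4 → ℂ := fun i => eval (fun i => f i z) (pderiv i P)
  have hf (i : Fin 4) : HasFDerivAt (f i) (fderiv ℝ (f i) z) z :=
    ((hdiff i).differentiableAt (hU.mem_nhds hz)).hasFDerivAt
  have hchain := sum_eval_pderiv_smul_eq_zero hf (eventually_of_mem (hU.mem_nhds hz) hrel)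
  have heul := sum_mul_eval_pderiv_eq_zero_of_euler heuler (hrel z hz)
  refine Matrix.exists_mulVec_eq_zero_iff.mp ⟨grad, ?_, ?_⟩
  · obtain ⟨i, hi⟩ := hgrad
    exact fun h => hi (congrFun h i)
  · ext r
    refine Fin.cases ?_ (fun j => ?_) r
    · simpa [Matrix.mulVec, dotProduct, grad] using heul
    · simpa [Matrix.mulVec, dotProduct, grad, mul_comm] using
        congrArg (fun L : (Fin 3 → ℝ) →L[ℝ] ℂ => L (Pi.single j 1)) hchain
end
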